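/- Let P be a (second countable) Hilbert C_0(Y)-module and E_P its associated Hilbert bundle. Then the map p ↦ p̂, where p̂(y) = p + I_yP, is a unitary C_0(Y)-module isomorphism from P onto C_0(Y,E_P); in particular every continuous section of E_P vanishing at infinity is of the form p̂ for a unique p ∈ P, and ⟨p̂,q̂⟩ = ⟨p,q⟩. -/

import Mathlib

noncomputable section
open scoped ZeroAtInfty
open Topology Filter ComplexConjugate

namespace Stabilization

/-- The set of continuous sections vanishing at infinity of a family of normed fibers,
relative to a given topology on the total space of the bundle. -/
def C0Sections {Y : Type} [TopologicalSpace Y] (H : Y → Type)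
    [∀ y, NormedAddCommGroup (H y)] (tE : TopologicalSpace ((y : Y) × H y)) :
    Set ((y : Y) → H y) :=
  {F | @Continuous Y ((y : Y) × H y) _ tE (fun y => ⟨y, F y⟩) ∧
    Tendsto (fun y => ‖F y‖) (cocompact Y) (nhds 0)}

/-- A Hilbert bundle over `Y` (Definition 2.1 of the paper): a family of Hilbert spaces
`H y` together with a second countable topology on the total space such that
(i) fiberwise addition and scalar multiplication are continuous, (ii) the norm along any
continuous section vanishing at infinity is continuous, (iii) the continuous sections
vanishing at infinity fill out every fiber, and (iv) the sets `U_{F,ε}` form a base. -/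
structure HilbertBundle (Y : Type) [TopologicalSpace Y] where
  H : Y → Type
  [nacg : ∀ y, NormedAddCommGroup (H y)]
  [ips : ∀ y, InnerProductSpace ℂ (H y)]
  [cpl : ∀ y, CompleteSpace (H y)]
  topE : TopologicalSpace ((y : Y) × H y)
  secondCountable : @SecondCountableTopology ((y : Y) × H y) topE
  add_cont : @Continuous {p : ((y : Y) × H y) × ((y : Y) × H y) // p.1.1 = p.2.1}
      ((y : Y) × H y)
      (@instTopologicalSpaceSubtype _ _ (@instTopologicalSpaceProd _ _ topE topE)) topE
      (fun p => ⟨p.1.1.1, p.1.1.2 + cast (congrArg H p.2).symm p.1.2.2⟩)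
  smul_cont : @Continuous (ℂ × (y : Y) × H y) ((y : Y) × H y)
      (@instTopologicalSpaceProd _ _ _ topE) topE
      (fun p => ⟨p.2.1, p.1 • p.2.2⟩)
  norm_cont : ∀ F ∈ C0Sections H topE, Continuous fun y => ‖F y‖
  fiber_full : ∀ (y : Y) (v : H y), ∃ F ∈ C0Sections H topE, F y = v
  isBasis : @TopologicalSpace.IsTopologicalBasis ((y : Y) × H y) topE
      {S | ∃ (U : Set Y) (F : (y : Y) → H y) (ε : ℝ), IsOpen U ∧ F ∈ C0Sections H topE ∧
        0 < ε ∧ S = {e | e.1 ∈ U ∧ ‖e.2 - F e.1‖ < ε}}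

attribute [instance] HilbertBundle.nacg HilbertBundle.ips HilbertBundle.cpl

/-- A Hilbert `C₀(Y)`-module structure on `P`: a right `C₀(Y)`-module action and a
`C₀(Y)`-valued inner product, complete for the norm `‖p‖ = ‖⟨p,p⟩‖^{1/2}` (completeness
being recorded by a `CompleteSpace` instance on `P` at use sites). -/
class HilbertCzeroModule (Y : Type) [TopologicalSpace Y] (P : Type)
    [NormedAddCommGroup P] [NormedSpace ℂ P] where
  msmul : P → C₀(Y, ℂ) → P
  minner : P → P → C₀(Y, ℂ)
  msmul_add_left : ∀ (p q : P) (f : C₀(Y, ℂ)), msmul (p + q) f = msmul p f + msmul q f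
  msmul_add_right : ∀ (p : P) (f g : C₀(Y, ℂ)), msmul p (f + g) = msmul p f + msmul p g
  msmul_mul : ∀ (p : P) (f g : C₀(Y, ℂ)), msmul (msmul p f) g = msmul p (f * g)
  msmul_csmul_left : ∀ (c : ℂ) (p : P) (f : C₀(Y, ℂ)), msmul (c • p) f = c • msmul p f
  msmul_csmul_right : ∀ (c : ℂ) (p : P) (f : C₀(Y, ℂ)), msmul p (c • f) = c • msmul p f
  minner_add_right : ∀ p q r : P, minner p (q + r) = minner p q + minner p r
  minner_conj : ∀ p q : P, minner p q = star (minner q p)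
  minner_csmul_right : ∀ (c : ℂ) (p q : P), minner p (c • q) = c • minner p q
  minner_msmul_right : ∀ (p q : P) (f : C₀(Y, ℂ)), minner p (msmul q f) = minner p q * f
  minner_self_re_nonneg : ∀ (p : P) (y : Y), 0 ≤ (minner p p y).re
  minner_self_im : ∀ (p : P) (y : Y), (minner p p y).im = 0
  norm_eq : ∀ p : P, ‖p‖ = Real.sqrt ‖minner p p‖

/-- The module action, with the base space explicit. -/
def modSMul (Y : Type) [TopologicalSpace Y] {P : Type} [NormedAddCommGroup P]
    [NormedSpace ℂ P] [HilbertCzeroModule Y P] (p : P) (f : C₀(Y, ℂ)) : P :=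
  HilbertCzeroModule.msmul p f

/-- The `C₀(Y)`-valued inner product, with the base space explicit. -/
def modIP (Y : Type) [TopologicalSpace Y] {P : Type} [NormedAddCommGroup P]
    [NormedSpace ℂ P] [HilbertCzeroModule Y P] (p q : P) : C₀(Y, ℂ) :=
  HilbertCzeroModule.minner p q

variable (Y : Type) [TopologicalSpace Y]
variable (P : Type) [NormedAddCommGroup P] [NormedSpace ℂ P] [HilbertCzeroModule Y P]

/-- `I_y P`: the closed submodule generated by products `p·f` with `f(y) = 0`. -/
def fiberIdeal (y : Y) : Submodule ℂ P :=
  Submodule.span ℂ {x | ∃ (f : C₀(Y, ℂ)) (p : P), f y = 0 ∧ x = modSMul Y p f}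

/-- The fiber `P_y = P / I_y P` of the Hilbert bundle associated to `P`. -/
abbrev Fib (y : Y) : Type := P ⧸ fiberIdeal Y P y

/-- `p ↦ p̂(y)`, the image of `p` in the fiber `P_y`. -/
def fibMk (y : Y) : P → Fib Y P y := Submodule.Quotient.mk

/-- The fiber norm of `p̂(y)`, computed from a representative. -/
def fibNormRep (y : Y) (p : P) : ℝ := Real.sqrt ((modIP Y p p) y).re

/-- The norm on the fiber `P_y` (the common value of `fibNormRep` over representatives). -/
def fibNormQ (y : Y) (h : Fib Y P y) : ℝ :=
  sInf {r | ∃ p : P, h = fibMk Y P y p ∧ r = fibNormRep Y P y p}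

/-- The total space `E_P = ⊔_y P_y` of the bundle associated to `P`. -/
abbrev TotalP : Type := (y : Y) × Fib Y P y

/-- The basic sets `U_{p,ε}` of the bundle `E_P`. -/
def basisP : Set (Set (TotalP Y P)) :=
  {S | ∃ (U : Set Y) (p : P) (ε : ℝ), IsOpen U ∧ 0 < ε ∧
    S = {e : TotalP Y P | e.1 ∈ U ∧ fibNormQ Y P e.1 (e.2 - fibMk Y P e.1 p) < ε}}

/-- The topology on `E_P` generated by the sets `U_{p,ε}`. -/
def topEP : TopologicalSpace (TotalP Y P) := TopologicalSpace.generateFrom (basisP Y P)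

/-- The continuous sections of `E_P` vanishing at infinity. -/
def C0SectionsP : Set ((y : Y) → Fib Y P y) :=
  {F | @Continuous Y (TotalP Y P) _ (topEP Y P) (fun y => ⟨y, F y⟩) ∧
    Tendsto (fun y => fibNormQ Y P y (F y)) (cocompact Y) (nhds 0)}

/-- The section `p̂` associated to `p ∈ P`. -/
def hatSec (p : P) : (y : Y) → Fib Y P y := fun y => fibMk Y P y p

/-- Transport between fibers of `E_P` over equal base points. -/
def fcast {y z : Y} (h : y = z) : Fib Y P y → Fib Y P z := fun v => h ▸ v


variable (Y : Type) [TopologicalSpace Y]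

/-- A second countable locally compact Hausdorff proper topological groupoid with unit
space `Y`.  Multiplication is recorded as a total map which is only constrained on
composable pairs. -/
structure LCGroupoid where
  G : Type
  [topG : TopologicalSpace G]
  [t2G : T2Space G]
  [lcG : LocallyCompactSpace G]
  [scG : SecondCountableTopology G]
  [mG : MeasurableSpace G]
  [bG : BorelSpace G]
  r : G → Y
  s : G → Y
  unit : Y → G
  mul : G → G → G
  inv : G → G
  unit_embedding : Topology.IsEmbedding unit
  r_unit : ∀ y, r (unit y) = y
  s_unit : ∀ y, s (unit y) = y
  r_cont : Continuous r
  s_cont : Continuous s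
  inv_cont : Continuous inv
  mul_cont : Continuous fun p : {p : G × G // s p.1 = r p.2} => mul p.1.1 p.1.2
  r_mul : ∀ g h, s g = r h → r (mul g h) = r g
  s_mul : ∀ g h, s g = r h → s (mul g h) = s h
  mul_assoc : ∀ g h k, s g = r h → s h = r k → mul (mul g h) k = mul g (mul h k)
  mul_unit : ∀ g, mul g (unit (s g)) = g
  unit_mul : ∀ g, mul (unit (r g)) g = g
  r_inv : ∀ g, r (inv g) = s g
  s_inv : ∀ g, s (inv g) = r g
  mul_inv : ∀ g, mul g (inv g) = unit (r g)
  inv_mul : ∀ g, mul (inv g) g = unit (s g)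
  proper : IsProperMap fun g => (r g, s g)

attribute [instance] LCGroupoid.topG LCGroupoid.t2G LCGroupoid.lcG LCGroupoid.scG
  LCGroupoid.mG LCGroupoid.bG

variable (Gp : LCGroupoid Y)

/-- A left Haar system `{λ^y}` for the groupoid `Gp`:  `λ^y` is a Radon-type measure
concentrated on `G^y = r⁻¹(y)` with support `G^y`, varying continuously, and
left invariant. -/
structure HaarSystem where
  lam : Y → MeasureTheory.Measure Gp.G
  concentrated : ∀ y, lam y ((Gp.r ⁻¹' {y})ᶜ) = 0
  full : ∀ (y : Y) (U : Set Gp.G), IsOpen U → (U ∩ Gp.r ⁻¹' {y}).Nonempty → lam y U ≠ 0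
  finiteOnCompacts : ∀ (y : Y) (K : Set Gp.G), IsCompact K → lam y K ≠ ⊤
  integral_continuous : ∀ F : Gp.G → ℂ, Continuous F → HasCompactSupport F →
    Continuous fun y => ∫ g, F g ∂(lam y)
  left_invariant : ∀ (g₀ : Gp.G) (F : Gp.G → ℂ), Continuous F → HasCompactSupport F →
    ∫ g, F (Gp.mul g₀ g) ∂(lam (Gp.s g₀)) = ∫ g, F g ∂(lam (Gp.r g₀))

/-- Continuous compactly supported functions on the groupoid `Gp`. -/
def CcFun : Type := {F : Gp.G → ℂ // Continuous F ∧ HasCompactSupport F}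


section GroupoidActions

variable {Y : Type} [TopologicalSpace Y] (Gp : LCGroupoid Y)
variable (P : Type) [NormedAddCommGroup P] [NormedSpace ℂ P] [HilbertCzeroModule Y P]

/-- A continuous, unitary left action of the groupoid `Gp` on the Hilbert bundle `E_P`
associated to the Hilbert `C₀(Y)`-module `P`: this is the datum making `P` a
`G`-Hilbert module. -/
structure GAction where
  act : (g : Gp.G) → Fib Y P (Gp.s g) → Fib Y P (Gp.r g)
  act_add : ∀ (g : Gp.G) (v w : Fib Y P (Gp.s g)), act g (v + w) = act g v + act g w
  act_csmul : ∀ (g : Gp.G) (c : ℂ) (v : Fib Y P (Gp.s g)), act g (c • v) = c • act g v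
  act_norm : ∀ (g : Gp.G) (v : Fib Y P (Gp.s g)),
    fibNormQ Y P (Gp.r g) (act g v) = fibNormQ Y P (Gp.s g) v
  act_surjective : ∀ g : Gp.G, Function.Surjective (act g)
  act_unit : ∀ (y : Y) (v : Fib Y P y),
    act (Gp.unit y) (fcast Y P (Gp.s_unit y).symm v) = fcast Y P (Gp.r_unit y).symm v
  act_mul : ∀ (g h : Gp.G) (hc : Gp.s g = Gp.r h) (v : Fib Y P (Gp.s h)),
    act (Gp.mul g h) (fcast Y P (Gp.s_mul g h hc).symm v) =
      fcast Y P (Gp.r_mul g h hc).symm (act g (fcast Y P hc.symm (act h v)))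
  act_cont : @Continuous {q : Gp.G × TotalP Y P // Gp.s q.1 = q.2.1} (TotalP Y P)
    (@instTopologicalSpaceSubtype _ _ (@instTopologicalSpaceProd _ _ _ (topEP Y P)))
    (topEP Y P)
    (fun q => ⟨Gp.r q.1.1, act q.1.1 (fcast Y P q.2.symm q.1.2.2)⟩)

variable {Gp P}
variable {Q : Type} [NormedAddCommGroup Q] [NormedSpace ℂ Q] [HilbertCzeroModule Y Q]

/-- A `G`-equivariant unitary isomorphism of `G`-Hilbert modules:  a bijective,
`ℂ`-linear, `C₀(Y)`-linear, inner-product preserving map intertwining the `G`-actions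
on the associated Hilbert bundles. -/
def IsGEquivariantUnitary (T : P → Q) (AP : GAction Gp P) (AQ : GAction Gp Q) : Prop :=
  Function.Bijective T ∧
  (∀ p p' : P, T (p + p') = T p + T p') ∧
  (∀ (c : ℂ) (p : P), T (c • p) = c • T p) ∧
  (∀ (p : P) (f : C₀(Y, ℂ)), T (modSMul Y p f) = modSMul Y (T p) f) ∧
  (∀ p p' : P, modIP Y (T p) (T p') = modIP Y p p') ∧
  (∀ (g : Gp.G) (p p' : P),
      AP.act g (fibMk Y P (Gp.s g) p) = fibMk Y P (Gp.r g) p' →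
      AQ.act g (fibMk Y Q (Gp.s g) (T p)) = fibMk Y Q (Gp.r g) (T p'))

/-- Equivalence of `G`-Hilbert modules: existence of a `G`-equivariant unitary. -/
def GEquiv (AP : GAction Gp P) (AQ : GAction Gp Q) : Prop :=
  ∃ T : P → Q, IsGEquivariantUnitary T AP AQ

end GroupoidActions

section ModuleConstructions

variable {Y : Type} [TopologicalSpace Y] (Gp : LCGroupoid Y)

/-- Data exhibiting a Hilbert `C₀(Y)`-module `PG` as the completion `P_G` of the
pre-Hilbert `C₀(Y)`-module `C_c(G)`, with module action `F·f = F·(f∘r)` and inner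
product `⟨F₁,F₂⟩(y) = ∫_{G^y} conj F₁ · F₂ dλ^y`. -/
structure PGData (hs : HaarSystem Y Gp) (PG : Type) [NormedAddCommGroup PG]
    [NormedSpace ℂ PG] [HilbertCzeroModule Y PG] where
  emb : CcFun Y Gp → PG
  emb_add : ∀ F₁ F₂ F₃ : CcFun Y Gp, F₃.1 = F₁.1 + F₂.1 → emb F₃ = emb F₁ + emb F₂
  emb_csmul : ∀ (c : ℂ) (F₁ F₃ : CcFun Y Gp), F₃.1 = c • F₁.1 → emb F₃ = c • emb F₁
  emb_msmul : ∀ (F₁ F₃ : CcFun Y Gp) (f : C₀(Y, ℂ)),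
    F₃.1 = (fun g => F₁.1 g * f (Gp.r g)) → emb F₃ = modSMul Y (emb F₁) f
  emb_inner : ∀ (F₁ F₂ : CcFun Y Gp) (y : Y),
    modIP Y (emb F₁) (emb F₂) y = ∫ g, conj (F₁.1 g) * F₂.1 g ∂(hs.lam y)
  emb_dense : ∀ (p : PG) (ε : ℝ), 0 < ε → ∃ F : CcFun Y Gp, ‖p - emb F‖ < ε

variable {Gp}

/-- The natural left translation action of `G` on `L²(G) = E_{P_G}`, characterized on
the dense image of `C_c(G)` by `(g·ξ)(h) = ξ(g⁻¹h)` for `h ∈ G^{r(g)}`. -/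
def IsNaturalPGAction {hs : HaarSystem Y Gp} {PG : Type} [NormedAddCommGroup PG]
    [NormedSpace ℂ PG] [HilbertCzeroModule Y PG] (d : PGData Gp hs PG)
    (A : GAction Gp PG) : Prop :=
  ∀ (g : Gp.G) (F F' : CcFun Y Gp),
    (∀ h : Gp.G, Gp.r h = Gp.r g → F'.1 h = F.1 (Gp.mul (Gp.inv g) h)) →
    A.act g (fibMk Y PG (Gp.s g) (d.emb F)) = fibMk Y PG (Gp.r g) (d.emb F')

end ModuleConstructions

section TensorSum

/-- Data exhibiting `R` as the interior tensor product `P ⊗_{C₀(Y)} Q` of two Hilbert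
`C₀(Y)`-modules: a balanced bilinear map with dense span satisfying
`⟨p₁⊗q₁, p₂⊗q₂⟩ = ⟨p₁,p₂⟩⟨q₁,q₂⟩`. -/
structure TensorData (Y : Type) [TopologicalSpace Y] (P Q R : Type)
    [NormedAddCommGroup P] [NormedSpace ℂ P] [HilbertCzeroModule Y P]
    [NormedAddCommGroup Q] [NormedSpace ℂ Q] [HilbertCzeroModule Y Q]
    [NormedAddCommGroup R] [NormedSpace ℂ R] [HilbertCzeroModule Y R] where
  t : P → Q → R
  t_add_left : ∀ (p p' : P) (q : Q), t (p + p') q = t p q + t p' q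
  t_add_right : ∀ (p : P) (q q' : Q), t p (q + q') = t p q + t p q'
  t_csmul_left : ∀ (c : ℂ) (p : P) (q : Q), t (c • p) q = c • t p q
  t_csmul_right : ∀ (c : ℂ) (p : P) (q : Q), t p (c • q) = c • t p q
  t_msmul_left : ∀ (p : P) (q : Q) (f : C₀(Y, ℂ)), t (modSMul Y p f) q = modSMul Y (t p q) f
  t_msmul_right : ∀ (p : P) (q : Q) (f : C₀(Y, ℂ)), t p (modSMul Y q f) = modSMul Y (t p q) f
  t_inner : ∀ (p p' : P) (q q' : Q),
    modIP Y (t p q) (t p' q') = modIP Y p p' * modIP Y q q'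
  t_dense : ∀ (x : R) (ε : ℝ), 0 < ε →
    ∃ (n : ℕ) (ps : Fin n → P) (qs : Fin n → Q), ‖x - ∑ i, t (ps i) (qs i)‖ < ε

/-- Data exhibiting `S` as the Hilbert `C₀(Y)`-module direct sum `P ⊕ Q`. -/
structure SumData (Y : Type) [TopologicalSpace Y] (P Q S : Type)
    [NormedAddCommGroup P] [NormedSpace ℂ P] [HilbertCzeroModule Y P]
    [NormedAddCommGroup Q] [NormedSpace ℂ Q] [HilbertCzeroModule Y Q]
    [NormedAddCommGroup S] [NormedSpace ℂ S] [HilbertCzeroModule Y S] where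
  inl : P → S
  inr : Q → S
  inl_add : ∀ p p' : P, inl (p + p') = inl p + inl p'
  inr_add : ∀ q q' : Q, inr (q + q') = inr q + inr q'
  inl_csmul : ∀ (c : ℂ) (p : P), inl (c • p) = c • inl p
  inr_csmul : ∀ (c : ℂ) (q : Q), inr (c • q) = c • inr q
  inl_msmul : ∀ (p : P) (f : C₀(Y, ℂ)), inl (modSMul Y p f) = modSMul Y (inl p) f
  inr_msmul : ∀ (q : Q) (f : C₀(Y, ℂ)), inr (modSMul Y q f) = modSMul Y (inr q) f
  inner_ll : ∀ p p' : P, modIP Y (inl p) (inl p') = modIP Y p p'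
  inner_rr : ∀ q q' : Q, modIP Y (inr q) (inr q') = modIP Y q q'
  inner_lr : ∀ (p : P) (q : Q), modIP Y (inl p) (inr q) = 0
  total : ∀ x : S, ∃ (p : P) (q : Q), x = inl p + inr q

/-- Data exhibiting `S` as the Hilbert `C₀(Y)`-module direct sum `⊕_{i=1}^∞ P i` of a
sequence of Hilbert `C₀(Y)`-modules: the module of sequences `{p_i}`, `p_i ∈ P i`, with
`Σ_i ⟨p_i,p_i⟩` convergent in `C₀(Y)`. -/
structure InftySumData (Y : Type) [TopologicalSpace Y] (Pf : ℕ → Type) (S : Type)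
    [∀ i, NormedAddCommGroup (Pf i)] [∀ i, NormedSpace ℂ (Pf i)]
    [∀ i, HilbertCzeroModule Y (Pf i)]
    [NormedAddCommGroup S] [NormedSpace ℂ S] [HilbertCzeroModule Y S] where
  proj : (i : ℕ) → S → Pf i
  proj_add : ∀ (i : ℕ) (x x' : S), proj i (x + x') = proj i x + proj i x'
  proj_csmul : ∀ (i : ℕ) (c : ℂ) (x : S), proj i (c • x) = c • proj i x
  proj_msmul : ∀ (i : ℕ) (x : S) (f : C₀(Y, ℂ)),
    proj i (modSMul Y x f) = modSMul Y (proj i x) f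
  proj_inner : ∀ x x' : S, HasSum (fun i => modIP Y (proj i x) (proj i x')) (modIP Y x x')
  proj_injective : ∀ x x' : S, (∀ i, proj i x = proj i x') → x = x'
  proj_surjective : ∀ u : (i : ℕ) → Pf i, Summable (fun i => modIP Y (u i) (u i)) →
    ∃ x : S, ∀ i, proj i x = u i

variable {Y : Type} [TopologicalSpace Y] {Gp : LCGroupoid Y}
variable {P Q R S : Type}
  [NormedAddCommGroup P] [NormedSpace ℂ P] [HilbertCzeroModule Y P]
  [NormedAddCommGroup Q] [NormedSpace ℂ Q] [HilbertCzeroModule Y Q]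
  [NormedAddCommGroup R] [NormedSpace ℂ R] [HilbertCzeroModule Y R]
  [NormedAddCommGroup S] [NormedSpace ℂ S] [HilbertCzeroModule Y S]

/-- The diagonal `G`-action on a tensor product `P ⊗_{C₀(Y)} Q`. -/
def IsDiagonalAction (td : TensorData Y P Q R) (AP : GAction Gp P) (AQ : GAction Gp Q)
    (AR : GAction Gp R) : Prop :=
  ∀ (g : Gp.G) (p p' : P) (q q' : Q),
    AP.act g (fibMk Y P (Gp.s g) p) = fibMk Y P (Gp.r g) p' →
    AQ.act g (fibMk Y Q (Gp.s g) q) = fibMk Y Q (Gp.r g) q' →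
    AR.act g (fibMk Y R (Gp.s g) (td.t p q)) = fibMk Y R (Gp.r g) (td.t p' q')

/-- The coordinatewise `G`-action on a direct sum `P ⊕ Q`. -/
def IsCoordinateSumAction (sd : SumData Y P Q S) (AP : GAction Gp P) (AQ : GAction Gp Q)
    (AS : GAction Gp S) : Prop :=
  (∀ (g : Gp.G) (p p' : P),
    AP.act g (fibMk Y P (Gp.s g) p) = fibMk Y P (Gp.r g) p' →
    AS.act g (fibMk Y S (Gp.s g) (sd.inl p)) = fibMk Y S (Gp.r g) (sd.inl p')) ∧
  (∀ (g : Gp.G) (q q' : Q),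
    AQ.act g (fibMk Y Q (Gp.s g) q) = fibMk Y Q (Gp.r g) q' →
    AS.act g (fibMk Y S (Gp.s g) (sd.inr q)) = fibMk Y S (Gp.r g) (sd.inr q'))

/-- The coordinatewise `G`-action on an infinite direct sum `⊕_{i=1}^∞ P i`. -/
def IsCoordinateInftyAction {Pf : ℕ → Type} [∀ i, NormedAddCommGroup (Pf i)]
    [∀ i, NormedSpace ℂ (Pf i)] [∀ i, HilbertCzeroModule Y (Pf i)]
    (d : InftySumData Y Pf S) (Af : (i : ℕ) → GAction Gp (Pf i))
    (AS : GAction Gp S) : Prop :=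
  ∀ (g : Gp.G) (x x' : S),
    AS.act g (fibMk Y S (Gp.s g) x) = fibMk Y S (Gp.r g) x' →
    ∀ i, (Af i).act g (fibMk Y (Pf i) (Gp.s g) (d.proj i x)) =
      fibMk Y (Pf i) (Gp.r g) (d.proj i x')

end TensorSum

/-!
At each point `y`, `⟨·,·⟩(y)` is a positive semidefinite inner product on `P`; its seminorm
`‖p‖_y = ⟨p,p⟩(y)^{1/2}` vanishes on `I_yP`, so it descends to the fibre `P_y`. Conversely
every `p` with `⟨p,p⟩(y) = 0` lies in `I_yP`: for `b = ⟨p,p⟩^{1/4}` the elements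
`p·(b/(b² + δ²))` converge as `δ → 0` to some `q` with `p = q·b`, and `b(y) = 0`. The same fact
gives `(p·f)^(y) = f(y)·p̂(y)`, as `p·f - f(y)·p` is null at `y`. Hence `p ↦ p̂` is fibrewise
isometric, and `‖p‖ = sup_y ‖p‖_y` makes it injective.

For surjectivity, a continuous section `F` vanishing at infinity is uniformly approximated by
some `p̂`: cover the compact set where `F` is not small by finitely many open sets on which `F`
is close to some `p̂_z`, and glue the `p_z` with a subordinate partition of unity. The
approximants form a Cauchy sequence in `P`, whose limit `p` has `p̂ = F`.
-/

theorem cauchySeq_of_dist_le_add {α : Type*} [PseudoMetricSpace α] {u : ℕ → α} {δ : ℕ → ℝ}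
    (hδ : Tendsto δ atTop (𝓝 0)) (h : ∀ n m, dist (u n) (u m) ≤ δ n + δ m) : CauchySeq u := by
  refine Metric.cauchySeq_iff'.2 fun ε hε => ?_
  obtain ⟨N, hN⟩ := eventually_atTop.1 (hδ.eventually (gt_mem_nhds (half_pos hε)))
  exact ⟨N, fun n hn => (h n N).trans_lt (by linarith [hN n hn, hN N le_rfl])⟩

theorem seminorm_sub_sum_smul_le {𝕜 E ι : Type*} [RCLike 𝕜] [AddCommGroup E] [Module 𝕜 E]
    (N : Seminorm 𝕜 E) (s : Finset ι) {c : ι → ℝ} (hc0 : ∀ i ∈ s, 0 ≤ c i)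
    (hc1 : ∑ i ∈ s, c i ≤ 1) {v : E} {w : ι → E} {η : ℝ} (hη : 0 ≤ η)
    (hv : ∑ i ∈ s, c i = 1 ∨ N v ≤ η) (hw : ∀ i ∈ s, c i ≠ 0 → N (v - w i) ≤ η) :
    N (v - ∑ i ∈ s, (c i : 𝕜) • w i) ≤ η + η := by
  have hdecomp : v - ∑ i ∈ s, (c i : 𝕜) • w i
      = ((1 - ∑ i ∈ s, c i : ℝ) : 𝕜) • v + ∑ i ∈ s, (c i : 𝕜) • (v - w i) := by
    simp only [RCLike.ofReal_sub, RCLike.ofReal_one, RCLike.ofReal_sum, sub_smul, one_smul,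
      Finset.sum_smul, smul_sub, Finset.sum_sub_distrib]
    abel
  rw [hdecomp]
  refine (map_add_le_add N _ _).trans (add_le_add ?_ ?_)
  · rw [map_smul_eq_mul, RCLike.norm_ofReal, abs_of_nonneg (by linarith)]
    rcases hv with hv | hv
    · rw [hv, sub_self, zero_mul]
      exact hη
    · have h1 : 1 - ∑ i ∈ s, c i ≤ 1 := by linarith [Finset.sum_nonneg hc0]
      exact (mul_le_of_le_one_left (apply_nonneg N v) h1).trans hv
  · calc N (∑ i ∈ s, (c i : 𝕜) • (v - w i)) ≤ ∑ i ∈ s, c i * η := by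
          refine (Finset.le_sum_of_subadditive N (map_zero N).le (map_add_le_add N) _ _).trans
            (Finset.sum_le_sum fun i hi => ?_)
          rw [map_smul_eq_mul, RCLike.norm_ofReal, abs_of_nonneg (hc0 i hi)]
          rcases eq_or_ne (c i) 0 with h | h
          · rw [h, zero_mul, zero_mul]
          · exact mul_le_mul_of_nonneg_left (hw i hi h) (hc0 i hi)
      _ = (∑ i ∈ s, c i) * η := (Finset.sum_mul _ _ _).symm
      _ ≤ η := mul_le_of_le_one_left hη hc1

theorem abs_div_sq_add_sq_mul_sq_sub_le {β δ : ℝ} (hβ : 0 ≤ β) (hδ : 0 < δ) :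
    |β / (β ^ 2 + δ ^ 2) * β ^ 2 - β| ≤ δ := by
  have hpos : 0 < β ^ 2 + δ ^ 2 := by positivity
  have h : β / (β ^ 2 + δ ^ 2) * β ^ 2 - β = -(δ * (δ * β / (β ^ 2 + δ ^ 2))) := by
    field_simp
    ring
  rw [h, abs_neg, abs_of_nonneg (by positivity)]
  refine mul_le_of_le_one_right hδ.le ((div_le_one hpos).2 ?_)
  nlinarith [sq_nonneg (β - δ)]

theorem abs_div_sq_add_sq_sub_div_sq_add_sq_mul_sq_le {β δ δ' : ℝ} (hβ : 0 ≤ β) (hδ : 0 < δ)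
    (hδ' : 0 < δ') : |β / (β ^ 2 + δ ^ 2) - β / (β ^ 2 + δ' ^ 2)| * β ^ 2 ≤ δ + δ' :=
  calc |β / (β ^ 2 + δ ^ 2) - β / (β ^ 2 + δ' ^ 2)| * β ^ 2
      = |(β / (β ^ 2 + δ ^ 2) * β ^ 2 - β) - (β / (β ^ 2 + δ' ^ 2) * β ^ 2 - β)| := by
        rw [sub_sub_sub_cancel_right, ← sub_mul, abs_mul, abs_of_nonneg (sq_nonneg β)]
    _ ≤ δ + δ' := (abs_sub _ _).trans (add_le_add (abs_div_sq_add_sq_mul_sq_sub_le hβ hδ)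
        (abs_div_sq_add_sq_mul_sq_sub_le hβ hδ'))

theorem abs_div_sq_add_sq_mul_sub_one_mul_sq_le {β δ : ℝ} (hδ : 0 < δ) :
    |β / (β ^ 2 + δ ^ 2) * β - 1| * β ^ 2 ≤ δ ^ 2 := by
  have hpos : 0 < β ^ 2 + δ ^ 2 := by positivity
  have h : β / (β ^ 2 + δ ^ 2) * β - 1 = -(δ ^ 2 / (β ^ 2 + δ ^ 2)) := by
    field_simp
    ring
  rw [h, abs_neg, abs_of_nonneg (by positivity), div_mul_eq_mul_div, div_le_iff₀ hpos]
  nlinarith [sq_nonneg δ, sq_nonneg β, mul_nonneg (sq_nonneg δ) (sq_nonneg δ)]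

def compRe {Y : Type} [TopologicalSpace Y] (φ : ℝ → ℝ) (hφ : Continuous φ) (h0 : φ 0 = 0)
    (f : C₀(Y, ℂ)) : C₀(Y, ℂ) where
  toFun y := φ (f y).re
  continuous_toFun := by fun_prop
  zero_at_infty' := by
    have h := (show Continuous fun z : ℂ => (φ z.re : ℂ) by fun_prop).tendsto 0
    rw [Complex.zero_re, h0, Complex.ofReal_zero] at h
    exact h.comp f.zero_at_infty'

section

variable {Y : Type} [TopologicalSpace Y]
  {P : Type} [NormedAddCommGroup P] [NormedSpace ℂ P] [HilbertCzeroModule Y P]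

def modIPRight (p : P) : P →ₗ[ℂ] C₀(Y, ℂ) where
  toFun := modIP Y p
  map_add' := HilbertCzeroModule.minner_add_right p
  map_smul' c q := HilbertCzeroModule.minner_csmul_right c p q

theorem modIP_conj (p q : P) : modIP Y p q = star (modIP Y q p) :=
  HilbertCzeroModule.minner_conj p q

theorem modIP_add_right (p q r : P) : modIP Y p (q + r) = modIP Y p q + modIP Y p r :=
  map_add (modIPRight p) q r

theorem modIP_sub_right (p q r : P) : modIP Y p (q - r) = modIP Y p q - modIP Y p r :=
  map_sub (modIPRight p) q r

theorem modIP_smul_right (c : ℂ) (p q : P) : modIP Y p (c • q) = c • modIP Y p q :=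
  map_smul (modIPRight p) c q

theorem modIP_modSMul_right (p q : P) (f : C₀(Y, ℂ)) :
    modIP Y p (modSMul Y q f) = modIP Y p q * f :=
  HilbertCzeroModule.minner_msmul_right p q f

theorem modIP_add_left (p q r : P) : modIP Y (p + q) r = modIP Y p r + modIP Y q r := by
  rw [modIP_conj, modIP_add_right, star_add, ← modIP_conj, ← modIP_conj]

theorem modIP_sub_left (p q r : P) : modIP Y (p - q) r = modIP Y p r - modIP Y q r := by
  rw [modIP_conj, modIP_sub_right, star_sub, ← modIP_conj, ← modIP_conj]

theorem modIP_smul_left (c : ℂ) (p q : P) : modIP Y (c • p) q = star c • modIP Y p q := by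
  rw [modIP_conj, modIP_smul_right, star_smul, ← modIP_conj]

theorem modIP_modSMul_left (p q : P) (f : C₀(Y, ℂ)) :
    modIP Y (modSMul Y p f) q = star f * modIP Y p q := by
  rw [modIP_conj, modIP_modSMul_right, star_mul', ← modIP_conj, mul_comm]

theorem modIP_self_apply_re_nonneg (p : P) (y : Y) : 0 ≤ (modIP Y p p y).re :=
  HilbertCzeroModule.minner_self_re_nonneg p y

theorem modIP_self_apply_im (p : P) (y : Y) : (modIP Y p p y).im = 0 :=
  HilbertCzeroModule.minner_self_im p y

theorem modSMul_sub_right (p : P) (f g : C₀(Y, ℂ)) :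
    modSMul Y p (f - g) = modSMul Y p f - modSMul Y p g :=
  map_sub (AddMonoidHom.mk' (modSMul Y p) (HilbertCzeroModule.msmul_add_right p)) f g

theorem modSMul_modSMul (p : P) (f g : C₀(Y, ℂ)) :
    modSMul Y (modSMul Y p f) g = modSMul Y p (f * g) :=
  HilbertCzeroModule.msmul_mul p f g

@[reducible] def innerCoreAt (y : Y) : PreInnerProductSpace.Core ℂ P where
  inner p q := modIP Y p q y
  conj_inner_symm p q := by
    simp only [modIP_conj q p, ZeroAtInftyContinuousMap.star_apply]
    exact star_star _
  re_inner_nonneg p := modIP_self_apply_re_nonneg p y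
  add_left p q r := by simp only [modIP_add_left, ZeroAtInftyContinuousMap.add_apply]
  smul_left c p q := by
    simp only [modIP_smul_left, ZeroAtInftyContinuousMap.smul_apply, smul_eq_mul]
    rfl

theorem fibNormRep_add_le (y : Y) (p q : P) :
    fibNormRep Y P y (p + q) ≤ fibNormRep Y P y p + fibNormRep Y P y q :=
  @SeminormedSpace.Core.norm_triangle ℂ P _ _ (InnerProductSpace.Core.toNorm (c := innerCoreAt y))
    _ (InnerProductSpace.Core.toSeminormedSpaceCore (innerCoreAt y)) p q

theorem fibNormRep_smul (y : Y) (c : ℂ) (p : P) :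
    fibNormRep Y P y (c • p) = ‖c‖ * fibNormRep Y P y p :=
  @SeminormedSpace.Core.norm_smul ℂ P _ _ (InnerProductSpace.Core.toNorm (c := innerCoreAt y))
    _ (InnerProductSpace.Core.toSeminormedSpaceCore (innerCoreAt y)) c p

theorem fibNormRep_modSMul_sub_smul (y : Y) (p : P) (f : C₀(Y, ℂ)) (c : ℂ) :
    fibNormRep Y P y (modSMul Y p f - c • p) = ‖f y - c‖ * fibNormRep Y P y p := by
  have h : modIP Y (modSMul Y p f - c • p) (modSMul Y p f - c • p) y
      = (starRingEnd ℂ (f y - c) * (f y - c)) * modIP Y p p y := by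
    simp only [modIP_sub_left, modIP_sub_right, modIP_modSMul_left, modIP_modSMul_right,
      modIP_smul_left, modIP_smul_right, ZeroAtInftyContinuousMap.sub_apply,
      ZeroAtInftyContinuousMap.mul_apply, ZeroAtInftyContinuousMap.smul_apply,
      ZeroAtInftyContinuousMap.star_apply, smul_eq_mul, Complex.star_def, map_sub]
    ring
  rw [fibNormRep, fibNormRep, h, Complex.conj_mul', ← Complex.ofReal_pow, Complex.re_ofReal_mul,
    Real.sqrt_mul (sq_nonneg _), Real.sqrt_sq (norm_nonneg _)]

theorem fibNormRep_modSMul (y : Y) (p : P) (f : C₀(Y, ℂ)) :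
    fibNormRep Y P y (modSMul Y p f) = ‖f y‖ * fibNormRep Y P y p := by
  simpa using fibNormRep_modSMul_sub_smul y p f 0

theorem continuous_fibNormRep (p : P) : Continuous fun y : Y => fibNormRep Y P y p := by
  unfold fibNormRep
  fun_prop

theorem norm_modIP_self_apply (y : Y) (p : P) :
    ‖modIP Y p p y‖ = fibNormRep Y P y p ^ 2 := by
  rw [fibNormRep, Real.sq_sqrt (modIP_self_apply_re_nonneg p y), ← Complex.abs_re_eq_norm.2
    (modIP_self_apply_im p y), abs_of_nonneg (modIP_self_apply_re_nonneg p y)]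

theorem fibNormRep_le_norm (y : Y) (p : P) : fibNormRep Y P y p ≤ ‖p‖ := by
  rw [fibNormRep, HilbertCzeroModule.norm_eq (Y := Y) p]
  exact Real.sqrt_le_sqrt ((Complex.re_le_norm _).trans
    (BoundedContinuousFunction.norm_coe_le_norm (modIP Y p p).toBCF y))

theorem norm_le_of_forall_fibNormRep_le {p : P} {c : ℝ} (hc : 0 ≤ c)
    (h : ∀ y, fibNormRep Y P y p ≤ c) : ‖p‖ ≤ c := by
  rw [HilbertCzeroModule.norm_eq (Y := Y) p, Real.sqrt_le_left hc,
    ← ZeroAtInftyContinuousMap.norm_toBCF_eq_norm]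
  refine (BoundedContinuousFunction.norm_le (sq_nonneg c)).2 fun y => ?_
  exact (norm_modIP_self_apply y p).trans_le (pow_le_pow_left₀ (Real.sqrt_nonneg _) (h y) 2)

theorem norm_eq_iSup_fibNormRep (p : P) : ‖p‖ = ⨆ y, fibNormRep Y P y p := by
  have hbdd : BddAbove (Set.range fun y => fibNormRep Y P y p) :=
    ⟨‖p‖, Set.forall_mem_range.2 (fibNormRep_le_norm · p)⟩
  refine le_antisymm ?_ (Real.iSup_le (fibNormRep_le_norm · p) (norm_nonneg p))
  exact norm_le_of_forall_fibNormRep_le (Real.iSup_nonneg fun y => Real.sqrt_nonneg _)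
    (le_ciSup hbdd)

theorem norm_modSMul_le (p : P) (f : C₀(Y, ℂ)) : ‖modSMul Y p f‖ ≤ ‖f‖ * ‖p‖ := by
  refine norm_le_of_forall_fibNormRep_le (Y := Y) (by positivity) fun y => ?_
  rw [fibNormRep_modSMul]
  exact mul_le_mul (BoundedContinuousFunction.norm_coe_le_norm f.toBCF y)
    (fibNormRep_le_norm y p) (Real.sqrt_nonneg _) (norm_nonneg f)

theorem continuous_modSMul_left (f : C₀(Y, ℂ)) : Continuous (modSMul Y · f : P → P) :=
  AddMonoidHomClass.continuous_of_bound
    (AddMonoidHom.mk' (modSMul Y · f) (HilbertCzeroModule.msmul_add_left · · f)) ‖f‖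
    (norm_modSMul_le · f)

theorem exists_eq_modSMul_and_apply_eq_zero [CompleteSpace P] (p : P) :
    ∃ (q : P) (g : C₀(Y, ℂ)), p = modSMul Y q g ∧ ∀ y, modIP Y p p y = 0 → g y = 0 := by
  set β : Y → ℝ := fun y => √√(modIP Y p p y).re
  have hrep : ∀ y, fibNormRep Y P y p = β y ^ 2 := fun y =>
    (Real.sq_sqrt (Real.sqrt_nonneg _)).symm
  set b := compRe (fun t => √√t) (by fun_prop) (by simp) (modIP Y p p)
  have hb : ∀ y, b y = β y := fun _ => rfl
  set δ : ℕ → ℝ := fun n => 1 / (n + 1)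
  have hδ : ∀ n, 0 < δ n := fun n => Nat.one_div_pos_of_nat
  have hδ0 : Tendsto δ atTop (𝓝 0) := tendsto_one_div_add_atTop_nhds_zero_nat
  set k : ℕ → C₀(Y, ℂ) := fun n =>
    compRe (fun t => t / (t ^ 2 + δ n ^ 2))
      (continuous_id.div (by fun_prop) fun t => by have := hδ n; positivity) (by simp) b
  have hk : ∀ n y, k n y = ((β y / (β y ^ 2 + δ n ^ 2) : ℝ) : ℂ) := fun _ _ => rfl
  have hcauchy : CauchySeq fun n => modSMul Y p (k n) := by
    -- `‖p·k n‖_y = β³/(β² + δ²)` is within `δ` of `β y`, uniformly in `y`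
    refine cauchySeq_of_dist_le_add hδ0 fun n m => ?_
    rw [dist_eq_norm, ← modSMul_sub_right]
    refine norm_le_of_forall_fibNormRep_le (Y := Y) (by linarith [hδ n, hδ m]) fun y => ?_
    rw [fibNormRep_modSMul, ZeroAtInftyContinuousMap.sub_apply, hk, hk, ← Complex.ofReal_sub,
      Complex.norm_real, Real.norm_eq_abs, hrep]
    exact abs_div_sq_add_sq_sub_div_sq_add_sq_mul_sq_le (Real.sqrt_nonneg _) (hδ n) (hδ m)
  obtain ⟨q, hq⟩ := cauchySeq_tendsto_of_complete hcauchy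
  have hlim : Tendsto (fun n => modSMul Y (modSMul Y p (k n)) b) atTop (𝓝 p) := by
    refine tendsto_iff_norm_sub_tendsto_zero.2 (squeeze_zero (fun _ => norm_nonneg _)
      (fun n => ?_) (by simpa using hδ0.pow 2))
    rw [modSMul_modSMul]
    refine norm_le_of_forall_fibNormRep_le (Y := Y) (by positivity) fun y => ?_
    have h := fibNormRep_modSMul_sub_smul y p (k n * b) 1
    rw [one_smul] at h
    rw [h, ZeroAtInftyContinuousMap.mul_apply, hk, hb, ← Complex.ofReal_mul,
      ← Complex.ofReal_one, ← Complex.ofReal_sub, Complex.norm_real, Real.norm_eq_abs, hrep]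
    exact abs_div_sq_add_sq_mul_sub_one_mul_sq_le (hδ n)
  refine ⟨q, b, tendsto_nhds_unique hlim (((continuous_modSMul_left b).tendsto q).comp hq),
    fun y hy => ?_⟩
  simp [hb, β, hy]

theorem modIP_apply_eq_zero_of_mem_fiberIdeal {y : Y} {x : P} (p : P)
    (hx : x ∈ fiberIdeal Y P y) : modIP Y p x y = 0 := by
  induction hx using Submodule.span_induction with
  | mem z hz =>
    obtain ⟨f, q, hf, rfl⟩ := hz
    rw [modIP_modSMul_right, ZeroAtInftyContinuousMap.mul_apply, hf, mul_zero]
  | zero => exact congrArg (· y) (map_zero (modIPRight p))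
  | add u v _ _ hu hv =>
    rw [modIP_add_right, ZeroAtInftyContinuousMap.add_apply, hu, hv, add_zero]
  | smul c u _ hu =>
    rw [modIP_smul_right, ZeroAtInftyContinuousMap.smul_apply, hu, smul_zero]

theorem fibNormRep_eq_zero_of_mem_fiberIdeal {y : Y} {x : P} (hx : x ∈ fiberIdeal Y P y) :
    fibNormRep Y P y x = 0 := by
  rw [fibNormRep, modIP_apply_eq_zero_of_mem_fiberIdeal x hx, Complex.zero_re, Real.sqrt_zero]

theorem mem_fiberIdeal_of_fibNormRep_eq_zero [CompleteSpace P] {y : Y} {p : P}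
    (h : fibNormRep Y P y p = 0) : p ∈ fiberIdeal Y P y := by
  have hre : (modIP Y p p y).re = 0 :=
    le_antisymm (Real.sqrt_eq_zero'.1 h) (modIP_self_apply_re_nonneg p y)
  obtain ⟨q, g, rfl, hg⟩ := exists_eq_modSMul_and_apply_eq_zero (Y := Y) p
  exact Submodule.subset_span ⟨g, q, hg y (Complex.ext hre (modIP_self_apply_im _ y)), rfl⟩

theorem fibNormRep_eq_of_fibMk_eq {y : Y} {p q : P} (h : fibMk Y P y p = fibMk Y P y q) :
    fibNormRep Y P y p = fibNormRep Y P y q := by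
  have hpq := fibNormRep_eq_zero_of_mem_fiberIdeal ((Submodule.Quotient.eq _).mp h)
  have hqp := fibNormRep_eq_zero_of_mem_fiberIdeal ((Submodule.Quotient.eq _).mp h.symm)
  apply le_antisymm
  · simpa [hpq] using fibNormRep_add_le y q (p - q)
  · simpa [hqp] using fibNormRep_add_le y p (q - p)

theorem fibNormQ_fibMk (y : Y) (p : P) :
    fibNormQ Y P y (fibMk Y P y p) = fibNormRep Y P y p := by
  have : {r | ∃ q : P, fibMk Y P y p = fibMk Y P y q ∧ r = fibNormRep Y P y q}
      = {fibNormRep Y P y p} := by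
    ext r
    constructor
    · rintro ⟨q, hq, rfl⟩
      exact (fibNormRep_eq_of_fibMk_eq hq).symm
    · rintro rfl
      exact ⟨p, rfl, rfl⟩
  rw [fibNormQ, this, csInf_singleton]

theorem fibMk_surjective (y : Y) : Function.Surjective (fibMk Y P y) :=
  Submodule.Quotient.mk_surjective _

theorem fibMk_add (y : Y) (p q : P) : fibMk Y P y (p + q) = fibMk Y P y p + fibMk Y P y q :=
  Submodule.Quotient.mk_add _

theorem fibMk_sub (y : Y) (p q : P) : fibMk Y P y (p - q) = fibMk Y P y p - fibMk Y P y q :=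
  Submodule.Quotient.mk_sub _

theorem fibMk_smul (y : Y) (c : ℂ) (p : P) : fibMk Y P y (c • p) = c • fibMk Y P y p :=
  Submodule.Quotient.mk_smul _ c p

theorem fibMk_sum (y : Y) {ι : Type*} (s : Finset ι) (g : ι → P) :
    fibMk Y P y (∑ i ∈ s, g i) = ∑ i ∈ s, fibMk Y P y (g i) :=
  map_sum (fiberIdeal Y P y).mkQ g s

theorem fibMk_modSMul [CompleteSpace P] (y : Y) (p : P) (f : C₀(Y, ℂ)) :
    fibMk Y P y (modSMul Y p f) = f y • fibMk Y P y p := by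
  rw [← fibMk_smul, fibMk, Submodule.Quotient.eq]
  apply mem_fiberIdeal_of_fibNormRep_eq_zero
  rw [fibNormRep_modSMul_sub_smul, sub_self, norm_zero, zero_mul]

variable (P) in
def fibSeminorm (y : Y) : Seminorm ℂ (Fib Y P y) :=
  Seminorm.of (fibNormQ Y P y)
    (fun u v => by
      obtain ⟨p, rfl⟩ := fibMk_surjective y u
      obtain ⟨q, rfl⟩ := fibMk_surjective y v
      simp only [← fibMk_add, fibNormQ_fibMk, fibNormRep_add_le])
    (fun c u => by
      obtain ⟨p, rfl⟩ := fibMk_surjective y u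
      rw [← fibMk_smul, fibNormQ_fibMk, fibNormQ_fibMk, fibNormRep_smul])

theorem fibSeminorm_apply (y : Y) (u : Fib Y P y) : fibSeminorm P y u = fibNormQ Y P y u := rfl

theorem eq_zero_of_fibSeminorm_eq_zero [CompleteSpace P] {y : Y} {u : Fib Y P y}
    (h : fibSeminorm P y u = 0) : u = 0 := by
  obtain ⟨p, rfl⟩ := fibMk_surjective y u
  rw [fibSeminorm_apply, fibNormQ_fibMk] at h
  exact (Submodule.Quotient.mk_eq_zero _).2 (mem_fiberIdeal_of_fibNormRep_eq_zero h)

theorem hatSec_mem_C0SectionsP (p : P) : hatSec Y P p ∈ C0SectionsP Y P := by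
  refine ⟨continuous_generateFrom_iff.2 ?_, ?_⟩
  · rintro _ ⟨U, r, ε, hU, -, rfl⟩
    have : (fun y => (⟨y, hatSec Y P p y⟩ : TotalP Y P)) ⁻¹'
          {e | e.1 ∈ U ∧ fibNormQ Y P e.1 (e.2 - fibMk Y P e.1 r) < ε}
        = U ∩ {y | fibNormRep Y P y (p - r) < ε} := by
      ext y
      show y ∈ U ∧ fibNormQ Y P y (fibMk Y P y p - fibMk Y P y r) < ε ↔ _
      rw [← fibMk_sub, fibNormQ_fibMk]
      rfl
    rw [this]
    exact hU.inter (isOpen_lt (continuous_fibNormRep _) continuous_const)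
  · simp only [hatSec, fibNormQ_fibMk, fibNormRep]
    have h := (show Continuous fun z : ℂ => √z.re by fun_prop).tendsto 0
    rw [Complex.zero_re, Real.sqrt_zero] at h
    exact h.comp (modIP Y p p).zero_at_infty'

theorem hatSec_injective : Function.Injective (hatSec Y P) := fun p q h => by
  refine sub_eq_zero.1 (norm_le_zero_iff.1
    (norm_le_of_forall_fibNormRep_le (Y := Y) le_rfl fun y => ?_))
  exact (fibNormRep_eq_zero_of_mem_fiberIdeal ((Submodule.Quotient.eq _).1 (congrFun h y))).le

theorem isOpen_setOf_fibNormQ_sub_hatSec_lt {F : (y : Y) → Fib Y P y}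
    (hF : Continuous[_, topEP Y P] fun y => (⟨y, F y⟩ : TotalP Y P)) (p : P) {ε : ℝ}
    (hε : 0 < ε) : IsOpen {y | fibNormQ Y P y (F y - hatSec Y P p y) < ε} := by
  have h := @Continuous.isOpen_preimage Y (TotalP Y P) _ (topEP Y P) _ hF _
    (TopologicalSpace.isOpen_generateFrom_of_mem ⟨Set.univ, p, ε, isOpen_univ, hε, rfl⟩)
  simp only [Set.preimage, Set.mem_univ, true_and] at h
  exact h

theorem exists_forall_fibNormQ_sub_hatSec_le [T2Space Y] [LocallyCompactSpace Y]
    [CompleteSpace P] {F : (y : Y) → Fib Y P y} (hF : F ∈ C0SectionsP Y P) {ε : ℝ}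
    (hε : 0 < ε) : ∃ p : P, ∀ y, fibNormQ Y P y (F y - hatSec Y P p y) ≤ ε := by
  classical
  obtain ⟨K, hK, hKF⟩ := Filter.mem_cocompact.1 (hF.2.eventually (gt_mem_nhds (half_pos hε)))
  choose s hs using fun z => fibMk_surjective (P := P) z (F z)
  set V : Y → Set Y := fun z => {y | fibNormQ Y P y (F y - hatSec Y P (s z) y) < ε / 2}
  have hV : ∀ z, IsOpen (V z) := fun z =>
    isOpen_setOf_fibNormQ_sub_hatSec_lt hF.1 (s z) (half_pos hε)
  have hzV : ∀ z, z ∈ V z := fun z => by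
    simp only [V, Set.mem_ofPred_eq, hatSec, hs z, sub_self, ← fibSeminorm_apply, map_zero,
      half_pos hε]
  obtain ⟨T, hT⟩ := hK.elim_finite_subcover V hV fun y _ => Set.mem_iUnion.2 ⟨y, hzV y⟩
  have hTK : K ⊆ ⋃ i : T, V i := fun y hy => by
    obtain ⟨z, hz, hzy⟩ := Set.mem_iUnion₂.1 (hT hy)
    exact Set.mem_iUnion.2 ⟨⟨z, hz⟩, hzy⟩
  obtain ⟨f, hfV, hfc⟩ := PartitionOfUnity.exists_isSubordinate_of_locallyFinite_t2space hK
    (fun i : T => V i) (fun i => hV i) (locallyFinite_of_finite _) hTK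
  let ψ : T → C₀(Y, ℂ) := fun i =>
    ⟨⟨fun y => (f i y : ℂ), by fun_prop⟩, ((hfc i).comp_left Complex.ofReal_zero).is_zero_at_infty⟩
  refine ⟨∑ i : T, modSMul Y (s i) (ψ i), fun y => ?_⟩
  have hhat : hatSec Y P (∑ i : T, modSMul Y (s i) (ψ i)) y
      = ∑ i : T, (f i y : ℂ) • hatSec Y P (s i) y := by
    simp only [hatSec, fibMk_sum, fibMk_modSMul]
    rfl
  rw [hhat, ← fibSeminorm_apply, ← add_halves ε]
  refine seminorm_sub_sum_smul_le _ _ (fun i _ => f.nonneg i y) ?_ (half_pos hε).le ?_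
    fun i _ hi => (hfV i (subset_closure (Function.mem_support.2 hi))).le
  · simpa [finsum_eq_sum_of_fintype] using f.sum_le_one y
  · by_cases hy : y ∈ K
    · exact Or.inl (by simpa [finsum_eq_sum_of_fintype] using f.sum_eq_one hy)
    · exact Or.inr (hKF hy).le

theorem exists_hatSec_eq [T2Space Y] [LocallyCompactSpace Y] [CompleteSpace P]
    {F : (y : Y) → Fib Y P y} (hF : F ∈ C0SectionsP Y P) : ∃ p : P, hatSec Y P p = F := by
  set δ : ℕ → ℝ := fun n => 1 / (n + 1)
  have hδ0 : Tendsto δ atTop (𝓝 0) := tendsto_one_div_add_atTop_nhds_zero_nat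
  choose u hu using fun n =>
    exists_forall_fibNormQ_sub_hatSec_le hF (Nat.one_div_pos_of_nat : 0 < δ n)
  have hcauchy : CauchySeq u := by
    refine cauchySeq_of_dist_le_add hδ0 fun n m => ?_
    rw [dist_eq_norm]
    refine norm_le_of_forall_fibNormRep_le (Y := Y) (by positivity) fun y => ?_
    rw [← fibNormQ_fibMk, fibMk_sub, ← fibSeminorm_apply, add_comm]
    calc _ = fibSeminorm P y ((F y - hatSec Y P (u m) y) - (F y - hatSec Y P (u n) y)) := by
          congr 1; simp only [hatSec]; abel
      _ ≤ _ := map_sub_le_add _ _ _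
      _ ≤ δ m + δ n := add_le_add (hu m y) (hu n y)
  obtain ⟨p, hp⟩ := cauchySeq_tendsto_of_complete hcauchy
  refine ⟨p, funext fun y => ?_⟩
  have hle : ∀ n, fibSeminorm P y (F y - hatSec Y P p y) ≤ δ n + ‖u n - p‖ := fun n =>
    calc _ = fibSeminorm P y ((F y - hatSec Y P (u n) y) + hatSec Y P (u n - p) y) := by
          congr 1; simp only [hatSec, fibMk_sub]; abel
      _ ≤ _ := (map_add_le_add _ _ _).trans (add_le_add (hu n y)
          ((fibNormQ_fibMk y _).trans_le (fibNormRep_le_norm y _)))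
  have h0 : fibSeminorm P y (F y - hatSec Y P p y) ≤ 0 :=
    ge_of_tendsto' (by simpa using hδ0.add (tendsto_iff_norm_sub_tendsto_zero.1 hp)) hle
  exact (sub_eq_zero.1 (eq_zero_of_fibSeminorm_eq_zero (le_antisymm h0 (apply_nonneg _ _)))).symm

end

theorem hat_is_unitary_module_isomorphism_general
    (Y : Type) [TopologicalSpace Y] [T2Space Y] [LocallyCompactSpace Y]
    (P : Type) [NormedAddCommGroup P] [NormedSpace ℂ P] [CompleteSpace P]
    [HilbertCzeroModule Y P] :
    -- p̂ is a continuous section vanishing at infinity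
    (∀ p : P, hatSec Y P p ∈ C0SectionsP Y P) ∧
    -- the map p ↦ p̂ is onto C₀(Y, E_P), with a unique preimage
    (∀ F ∈ C0SectionsP Y P, ∃! p : P, hatSec Y P p = F) ∧
    -- additivity and ℂ-linearity
    (∀ p q : P, ∀ y, hatSec Y P (p + q) y = hatSec Y P p y + hatSec Y P q y) ∧
    (∀ (c : ℂ) (p : P) (y : Y), hatSec Y P (c • p) y = c • hatSec Y P p y) ∧
    -- C₀(Y)-module map: (p·f)^(y) = f(y)·p̂(y)
    (∀ (p : P) (f : C₀(Y, ℂ)) (y : Y), hatSec Y P (modSMul Y p f) y = f y • hatSec Y P p y) ∧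
    -- unitarity: fiberwise isometric (hence inner-product preserving, by polarization)
    (∀ (p q : P) (y : Y),
      fibNormQ Y P y (hatSec Y P p y - hatSec Y P q y) = fibNormRep Y P y (p - q)) ∧
    -- isometric for the uniform norm
    (∀ p : P, ‖p‖ = ⨆ y, fibNormQ Y P y (hatSec Y P p y)) := by
  refine ⟨hatSec_mem_C0SectionsP, fun F hF => ?_, fun p q y => fibMk_add y p q,
    fun c p y => fibMk_smul y c p, fun p f y => fibMk_modSMul y p f, fun p q y => ?_, fun p => ?_⟩
  · obtain ⟨p, hp⟩ := exists_hatSec_eq hF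
    exact ⟨p, hp, fun q hq => hatSec_injective (hq.trans hp.symm)⟩
  · rw [hatSec, hatSec, ← fibMk_sub, fibNormQ_fibMk]
  · simp only [hatSec, fibNormQ_fibMk, norm_eq_iSup_fibNormRep (Y := Y)]

/-- **Proposition 2.3 (second part).**  For a second countable Hilbert `C₀(Y)`-module
`P`, the map `p ↦ p̂`, `p̂(y) = p + I_yP`, is a unitary `C₀(Y)`-module isomorphism from
`P` onto `C₀(Y, E_P)`: every continuous section of `E_P` vanishing at infinity is `p̂`
for a unique `p ∈ P`, the map is `C₀(Y)`-linear, and it preserves the inner product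
(equivalently, it is fiberwise isometric and `‖p‖ = sup_y ‖p̂(y)‖`). -/
theorem hat_is_unitary_module_isomorphism
    (Y : Type) [TopologicalSpace Y] [T2Space Y] [LocallyCompactSpace Y]
    [SecondCountableTopology Y]
    (P : Type) [NormedAddCommGroup P] [NormedSpace ℂ P] [CompleteSpace P]
    [SecondCountableTopology P] [HilbertCzeroModule Y P] :
    -- p̂ is a continuous section vanishing at infinity
    (∀ p : P, hatSec Y P p ∈ C0SectionsP Y P) ∧
    -- the map p ↦ p̂ is onto C₀(Y, E_P), with a unique preimage
    (∀ F ∈ C0SectionsP Y P, ∃! p : P, hatSec Y P p = F) ∧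
    -- additivity and ℂ-linearity
    (∀ p q : P, ∀ y, hatSec Y P (p + q) y = hatSec Y P p y + hatSec Y P q y) ∧
    (∀ (c : ℂ) (p : P) (y : Y), hatSec Y P (c • p) y = c • hatSec Y P p y) ∧
    -- C₀(Y)-module map: (p·f)^(y) = f(y)·p̂(y)
    (∀ (p : P) (f : C₀(Y, ℂ)) (y : Y), hatSec Y P (modSMul Y p f) y = f y • hatSec Y P p y) ∧
    -- unitarity: fiberwise isometric (hence inner-product preserving, by polarization)
    (∀ (p q : P) (y : Y),
      fibNormQ Y P y (hatSec Y P p y - hatSec Y P q y) = fibNormRep Y P y (p - q)) ∧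
    -- isometric for the uniform norm
    (∀ p : P, ‖p‖ = ⨆ y, fibNormQ Y P y (hatSec Y P p y)) :=
  hat_is_unitary_module_isomorphism_general Y P

end Stabilization
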